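/- arXiv:2511.07826 — 3 statements merged into one kernel-verified Lean document; each statement's English description precedes it below -/
import Mathlib

section
/- For finite random variables Y, X, Z forming a Markov chain Y ↔ X ↔ Z, the expected IB distortion equals the information loss: E_{X,Z}[D_KL(P_{Y|X} ‖ P_{Y|Z})] = I(X;Y) − I(Z;Y). -/
open Real Finset

/-! With `p(x,y,z) = p(x) p(y|x) p(z|x)`, each term of the expected distortion splits as
`log (p(y|x) / p(y|z)) = log (p(y|x) / p(y)) - log (p(y,z) / (p(z) p(y)))`.
Weighting by `p(x,y,z)` and summing, the first part gives `I(X;Y)` because `z` sums out of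
`p(x,y,z)`, and the second gives `I(Z;Y)` because `x` sums out of it. -/

theorem Real.log_div_div_eq_log_div_sub_log_div_mul {a b c d : ℝ}
    (ha : a ≠ 0) (hb : b ≠ 0) (hc : c ≠ 0) (hd : d ≠ 0) :
    log (a / (b / c)) = log (a / d) - log (b / (c * d)) := by
  rw [log_div ha (div_ne_zero hb hc), log_div hb hc, log_div ha hd,
    log_div hb (mul_ne_zero hc hd), log_mul hc hd]
  ring

section MarkovChain

variable {X Y Z : Type*} [Fintype X] [Fintype Y] [Fintype Z]

theorem sum_sum_eq_sum_sum_sum_mul_of_sum_eq_one (g : X → Y → ℝ) (q : X → Z → ℝ)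
    (hq : ∀ x, ∑ z, q x z = 1) :
    ∑ x, ∑ y, g x y = ∑ x, ∑ z, ∑ y, g x y * q x z := by
  refine sum_congr rfl fun x _ => ?_
  rw [sum_comm]
  simp only [← mul_sum, hq, mul_one]

theorem sum_sum_sum_mul_comm (w : X → Y → Z → ℝ) (g : Y → Z → ℝ) :
    ∑ z, ∑ y, (∑ x, w x y z) * g y z = ∑ x, ∑ z, ∑ y, w x y z * g y z := by
  simp only [sum_mul]
  exact (sum_congr rfl fun _ _ => sum_comm).trans sum_comm

variable (px : X → ℝ) (pyx : X → Y → ℝ) (pzx : X → Z → ℝ)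

theorem expectedDistortion_eq_sum_sub
    (hpx : ∀ x, 0 < px x) (hpyx : ∀ x y, 0 < pyx x y) (hpzx : ∀ x z, 0 < pzx x z) :
    (∑ x, ∑ z, (px x * pzx x z) *
        (∑ y, pyx x y * log (pyx x y /
          ((∑ x', px x' * pyx x' y * pzx x' z) / (∑ x', px x' * pzx x' z)))))
      = ∑ x, ∑ z, ∑ y, (px x * pyx x y * pzx x z) *
          (log (pyx x y / ∑ x', px x' * pyx x' y)
            - log ((∑ x', px x' * pyx x' y * pzx x' z) /
                ((∑ x', px x' * pzx x' z) * (∑ x', px x' * pyx x' y)))) := by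
  refine sum_congr rfl fun x _ => sum_congr rfl fun z _ => ?_
  rw [mul_sum]
  refine sum_congr rfl fun y _ => ?_
  -- the summation index `x` witnesses that the marginals are positive
  have hpy : 0 < ∑ x', px x' * pyx x' y :=
    sum_pos (fun x' _ => mul_pos (hpx x') (hpyx x' y)) ⟨x, mem_univ x⟩
  have hpz : 0 < ∑ x', px x' * pzx x' z :=
    sum_pos (fun x' _ => mul_pos (hpx x') (hpzx x' z)) ⟨x, mem_univ x⟩
  have hpyz : 0 < ∑ x', px x' * pyx x' y * pzx x' z :=
    sum_pos (fun x' _ => mul_pos (mul_pos (hpx x') (hpyx x' y)) (hpzx x' z)) ⟨x, mem_univ x⟩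
  rw [log_div_div_eq_log_div_sub_log_div_mul (hpyx x y).ne' hpyz.ne' hpz.ne' hpy.ne']
  ring

end MarkovChain

theorem stmt0_general {X Y Z : Type*} [Fintype X] [Fintype Y] [Fintype Z]
    (px : X → ℝ) (pyx : X → Y → ℝ) (pzx : X → Z → ℝ)
    (hpx : ∀ x, 0 < px x) (hpyx : ∀ x y, 0 < pyx x y) (hpzx : ∀ x z, 0 < pzx x z)
    (hpzx1 : ∀ x, ∑ z, pzx x z = 1) :
    -- E_{X,Z}[D_KL(P_{Y|X} ‖ P_{Y|Z})]
    (∑ x, ∑ z, (px x * pzx x z) *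
        (∑ y, pyx x y * Real.log (pyx x y /
          ((∑ x', px x' * pyx x' y * pzx x' z) / (∑ x', px x' * pzx x' z)))))
      =
    -- I(X;Y)
    (∑ x, ∑ y, px x * pyx x y * Real.log (pyx x y / (∑ x', px x' * pyx x' y)))
      -
    -- I(Z;Y)
    (∑ z, ∑ y, (∑ x', px x' * pyx x' y * pzx x' z) *
        Real.log ((∑ x', px x' * pyx x' y * pzx x' z) /
          ((∑ x', px x' * pzx x' z) * (∑ x', px x' * pyx x' y)))) := by
  rw [expectedDistortion_eq_sum_sub px pyx pzx hpx hpyx hpzx, sum_sum_sum_mul_comm,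
    sum_sum_eq_sum_sum_sum_mul_of_sum_eq_one
      (fun x y => px x * pyx x y * log (pyx x y / ∑ x', px x' * pyx x' y)) pzx hpzx1]
  simp only [mul_sub, ← sum_sub_distrib]
  refine sum_congr rfl fun x _ => sum_congr rfl fun z _ => sum_congr rfl fun y _ => ?_
  ring

/-- For finite random variables `Y, X, Z` forming a Markov chain
`Y ↔ X ↔ Z` (joint pmf `p(x,y,z) = p(x) p(y|x) p(z|x)`), the expected IB distortion
equals the information loss: `E_{X,Z}[D_KL(P_{Y|X} ‖ P_{Y|Z})] = I(X;Y) − I(Z;Y)`. -/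
theorem stmt0 {X Y Z : Type*} [Fintype X] [Fintype Y] [Fintype Z]
    (px : X → ℝ) (pyx : X → Y → ℝ) (pzx : X → Z → ℝ)
    (hpx : ∀ x, 0 < px x) (hpyx : ∀ x y, 0 < pyx x y) (hpzx : ∀ x z, 0 < pzx x z)
    (hpx1 : ∑ x, px x = 1)
    (hpyx1 : ∀ x, ∑ y, pyx x y = 1)
    (hpzx1 : ∀ x, ∑ z, pzx x z = 1) :
    -- E_{X,Z}[D_KL(P_{Y|X} ‖ P_{Y|Z})]
    (∑ x, ∑ z, (px x * pzx x z) *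
        (∑ y, pyx x y * Real.log (pyx x y /
          ((∑ x', px x' * pyx x' y * pzx x' z) / (∑ x', px x' * pzx x' z)))))
      =
    -- I(X;Y)
    (∑ x, ∑ y, px x * pyx x y * Real.log (pyx x y / (∑ x', px x' * pyx x' y)))
      -
    -- I(Z;Y)
    (∑ z, ∑ y, (∑ x', px x' * pyx x' y * pzx x' z) *
        Real.log ((∑ x', px x' * pyx x' y * pzx x' z) /
          ((∑ x', px x' * pzx x' z) * (∑ x', px x' * pyx x' y)))) :=
  stmt0_general px pyx pzx hpx hpyx hpzx hpzx1
end

section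
/- For the Markov chain Y ↔ X ↔ Z ↔ Ẑ on finite sets, the expected channel-corrupted semantic distortion is upper-bounded by the expected conditional cross entropy with any variational decoder: E_{X,Z}[E_{Ẑ|Z}[D_KL(P_{Y|X} ‖ P_{Y|Ẑ})]] ≤ E_{Ẑ}[H(P_{Y|Ẑ}, Q_{Y|Ẑ})], where H(P,Q) = −Σ_y p(y) log q(y), for any conditional pmf q(y|ẑ) with q(y|ẑ) > 0 whenever p(y|ẑ) > 0. -/
/-!
Splitting the logarithm, the expected distortion equals `H(Y|Ẑ) - H(Y|X)` (with the entropy of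
`Y` given `X` averaged over the chain), because summing the joint weights over `X` and `Z`
yields the `(Y, Ẑ)`-marginal `p(ẑ) p(y|ẑ)`. The term `H(Y|X)` is nonnegative and may be
dropped, and `H(Y|Ẑ)` is bounded by the cross entropy with `q` through Gibbs' inequality for
each `ẑ`.
-/

open Real Finset

/-- Conditional pmf `p(y|zh)` induced by the chain `Y ↔ X ↔ Z ↔ Zh` with joint
`p(x,y,z,zh) = p(x) p(y|x) p(z|x) p(zh|z)`. -/
noncomputable def pYgivenZhat {X Y Z Zh : Type*} [Fintype X] [Fintype Z]
    (px : X → ℝ) (pyx : X → Y → ℝ) (pzx : X → Z → ℝ) (phz : Z → Zh → ℝ)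
    (y : Y) (zh : Zh) : ℝ :=
  (∑ x, ∑ z, px x * pyx x y * pzx x z * phz z zh) /
    (∑ x, ∑ z, px x * pzx x z * phz z zh)

lemma sum_mul_log_le_sum_mul_log {ι : Type*} [Fintype ι] {p q : ι → ℝ}
    (hp : ∀ i, 0 < p i) (hq : ∀ i, 0 < q i) (hsum : ∑ i, q i ≤ ∑ i, p i) :
    ∑ i, p i * log (q i) ≤ ∑ i, p i * log (p i) := by
  have termwise : ∀ i ∈ univ, p i * log (q i) - p i * log (p i) ≤ q i - p i := fun i _ => by
    have h := mul_le_mul_of_nonneg_left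
      (log_le_sub_one_of_pos (div_pos (hq i) (hp i))) (hp i).le
    rwa [log_div (hq i).ne' (hp i).ne', mul_sub, mul_sub, mul_div_cancel₀ _ (hp i).ne',
      mul_one] at h
  have h := sum_le_sum termwise
  rw [sum_sub_distrib, sum_sub_distrib] at h
  linarith

lemma sum_mul_log_nonpos {ι : Type*} [Fintype ι] {p : ι → ℝ}
    (hp : ∀ i, 0 ≤ p i) (hp1 : ∑ i, p i = 1) :
    ∑ i, p i * log (p i) ≤ 0 :=
  sum_nonpos fun i _ =>
    mul_log_nonpos (hp i) (hp1 ▸ single_le_sum (fun j _ => hp j) (mem_univ i))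

section MarkovChain

variable {X Y Z Zh : Type*} [Fintype X] [Fintype Z]
  (px : X → ℝ) (pyx : X → Y → ℝ) (pzx : X → Z → ℝ) (phz : Z → Zh → ℝ)

noncomputable def pZhat (zh : Zh) : ℝ :=
  ∑ x, ∑ z, px x * pzx x z * phz z zh

lemma pZhat_pos [Nonempty X] [Nonempty Z] (hpx : ∀ x, 0 < px x)
    (hpzx : ∀ x z, 0 < pzx x z) (hphz : ∀ z zh, 0 < phz z zh) (zh : Zh) :
    0 < pZhat px pzx phz zh :=
  sum_pos (fun x _ => sum_pos (fun z _ => mul_pos (mul_pos (hpx x) (hpzx x z)) (hphz z zh))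
    univ_nonempty) univ_nonempty

lemma pYgivenZhat_pos [Nonempty X] [Nonempty Z] (hpx : ∀ x, 0 < px x)
    (hpyx : ∀ x y, 0 < pyx x y) (hpzx : ∀ x z, 0 < pzx x z) (hphz : ∀ z zh, 0 < phz z zh)
    (y : Y) (zh : Zh) :
    0 < pYgivenZhat px pyx pzx phz y zh := by
  refine div_pos (sum_pos (fun x _ => sum_pos (fun z _ => ?_) univ_nonempty) univ_nonempty)
    (pZhat_pos px pzx phz hpx hpzx hphz zh)
  exact mul_pos (mul_pos (mul_pos (hpx x) (hpyx x y)) (hpzx x z)) (hphz z zh)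

lemma pZhat_mul_pYgivenZhat {y : Y} {zh : Zh} (h : pYgivenZhat px pyx pzx phz y zh ≠ 0) :
    pZhat px pzx phz zh * pYgivenZhat px pyx pzx phz y zh =
      ∑ x, ∑ z, px x * pyx x y * pzx x z * phz z zh :=
  mul_div_cancel₀ _ (div_ne_zero_iff.mp h).2

variable [Fintype Y]

lemma sum_pYgivenZhat (hpyx1 : ∀ x, ∑ y, pyx x y = 1) {zh : Zh}
    (h : pZhat px pzx phz zh ≠ 0) :
    ∑ y, pYgivenZhat px pyx pzx phz y zh = 1 := by
  have marginalize : ∑ y, ∑ x, ∑ z, px x * pyx x y * pzx x z * phz z zh =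
      pZhat px pzx phz zh := by
    rw [sum_comm]
    refine sum_congr rfl fun x _ => ?_
    rw [sum_comm]
    refine sum_congr rfl fun z _ => ?_
    rw [← sum_mul, ← sum_mul, ← mul_sum, hpyx1, mul_one]
  calc ∑ y, pYgivenZhat px pyx pzx phz y zh
      = (∑ y, ∑ x, ∑ z, px x * pyx x y * pzx x z * phz z zh) / pZhat px pzx phz zh := by
        simp only [pYgivenZhat, sum_div]; rfl
    _ = 1 := by rw [marginalize, div_self h]

variable [Fintype Zh]

lemma sum_chain_eq_sum_marginal (f : Y → Zh → ℝ) :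
    ∑ x, ∑ z, px x * pzx x z * ∑ zh, phz z zh * ∑ y, pyx x y * f y zh =
      ∑ zh, ∑ y, (∑ x, ∑ z, px x * pyx x y * pzx x z * phz z zh) * f y zh := by
  simp only [mul_sum, sum_mul]
  simp_rw [sum_comm (γ := Z) (α := Zh), sum_comm (γ := Z) (α := Y),
    sum_comm (γ := X) (α := Zh), sum_comm (γ := X) (α := Y)]
  congr! 4
  ring

lemma expected_distortion_eq (hpyx : ∀ x y, pyx x y ≠ 0)
    (hpY : ∀ y zh, pYgivenZhat px pyx pzx phz y zh ≠ 0) :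
    ∑ x, ∑ z, px x * pzx x z * ∑ zh, phz z zh *
        ∑ y, pyx x y * log (pyx x y / pYgivenZhat px pyx pzx phz y zh) =
      ∑ x, ∑ z, px x * pzx x z * ∑ zh, phz z zh * ∑ y, pyx x y * log (pyx x y) -
        ∑ zh, pZhat px pzx phz zh * ∑ y, pYgivenZhat px pyx pzx phz y zh *
          log (pYgivenZhat px pyx pzx phz y zh) := by
  have log_split : ∀ x y zh, pyx x y * log (pyx x y / pYgivenZhat px pyx pzx phz y zh) =
      pyx x y * log (pyx x y) - pyx x y * log (pYgivenZhat px pyx pzx phz y zh) :=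
    fun x y zh => by rw [log_div (hpyx x y) (hpY y zh), mul_sub]
  simp only [log_split, sum_sub_distrib, mul_sub]
  rw [sum_chain_eq_sum_marginal px pyx pzx phz fun y zh => log (pYgivenZhat px pyx pzx phz y zh)]
  congr 1
  refine sum_congr rfl fun zh _ => ?_
  rw [mul_sum]
  refine sum_congr rfl fun y _ => ?_
  rw [← mul_assoc, pZhat_mul_pYgivenZhat px pyx pzx phz (hpY y zh)]

end MarkovChain

theorem stmt1_general {X Y Z Zh : Type*} [Fintype X] [Fintype Y] [Fintype Z] [Fintype Zh]
    (px : X → ℝ) (pyx : X → Y → ℝ) (pzx : X → Z → ℝ) (phz : Z → Zh → ℝ)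
    (q : Zh → Y → ℝ)
    (hpx : ∀ x, 0 < px x) (hpyx : ∀ x y, 0 < pyx x y)
    (hpzx : ∀ x z, 0 < pzx x z) (hphz : ∀ z zh, 0 < phz z zh)
    (hpx1 : ∑ x, px x = 1)
    (hpyx1 : ∀ x, ∑ y, pyx x y = 1)
    (hpzx1 : ∀ x, ∑ z, pzx x z = 1)
    (hq1 : ∀ zh, ∑ y, q zh y = 1)
    -- absolute continuity: `q(y|zh) > 0` whenever `p(y|zh) > 0`
    (hq0 : ∀ zh y, 0 < pYgivenZhat px pyx pzx phz y zh → 0 < q zh y) :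
    -- E_{X,Z}[E_{Zh|Z}[D_KL(P_{Y|X} ‖ P_{Y|Zh})]]
    (∑ x, ∑ z, (px x * pzx x z) * ∑ zh, phz z zh *
        (∑ y, pyx x y * Real.log (pyx x y / pYgivenZhat px pyx pzx phz y zh)))
      ≤
    -- E_{Zh}[H(P_{Y|Zh}, Q_{Y|Zh})]
    (∑ zh, (∑ x, ∑ z, px x * pzx x z * phz z zh) *
        (-∑ y, pYgivenZhat px pyx pzx phz y zh * Real.log (q zh y))) := by
  have : Nonempty X := univ_nonempty_iff.mp (nonempty_of_sum_ne_zero (hpx1 ▸ one_ne_zero))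
  have : Nonempty Z := univ_nonempty_iff.mp
    (nonempty_of_sum_ne_zero ((hpzx1 (Classical.arbitrary X)) ▸ one_ne_zero))
  have hpZhat := pZhat_pos px pzx phz hpx hpzx hphz
  have hpY := pYgivenZhat_pos px pyx pzx phz hpx hpyx hpzx hphz
  have neg_cond_entropy_nonpos : ∑ x, ∑ z, px x * pzx x z * ∑ zh, phz z zh *
      ∑ y, pyx x y * log (pyx x y) ≤ 0 :=
    sum_nonpos fun x _ => sum_nonpos fun z _ =>
      mul_nonpos_of_nonneg_of_nonpos (mul_pos (hpx x) (hpzx x z)).le <|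
        sum_nonpos fun zh _ => mul_nonpos_of_nonneg_of_nonpos (hphz z zh).le <|
          sum_mul_log_nonpos (fun y => (hpyx x y).le) (hpyx1 x)
  have gibbs : ∀ zh,
      pZhat px pzx phz zh * ∑ y, pYgivenZhat px pyx pzx phz y zh * log (q zh y) ≤
      pZhat px pzx phz zh * ∑ y, pYgivenZhat px pyx pzx phz y zh *
        log (pYgivenZhat px pyx pzx phz y zh) := fun zh =>
    mul_le_mul_of_nonneg_left (sum_mul_log_le_sum_mul_log (hpY · zh)
      (fun y => hq0 zh y (hpY y zh))
      (by rw [hq1, sum_pYgivenZhat px pyx pzx phz hpyx1 (hpZhat zh).ne'])) (hpZhat zh).le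
  rw [expected_distortion_eq px pyx pzx phz (fun x y => (hpyx x y).ne')
    fun y zh => (hpY y zh).ne']
  change _ ≤ ∑ zh, pZhat px pzx phz zh * _
  simp only [mul_neg, sum_neg_distrib]
  linarith [sum_le_sum fun zh (_ : zh ∈ univ) => gibbs zh]

/-- For the Markov chain `Y ↔ X ↔ Z ↔ Zh` on finite sets, the expected
channel-corrupted semantic distortion is upper-bounded by the expected conditional
cross entropy with any variational decoder `q(y|zh)`:
`E_{X,Z}[E_{Zh|Z}[D_KL(P_{Y|X} ‖ P_{Y|Zh})]] ≤ E_{Zh}[H(P_{Y|Zh}, Q_{Y|Zh})]`. -/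
theorem stmt1 {X Y Z Zh : Type*} [Fintype X] [Fintype Y] [Fintype Z] [Fintype Zh]
    (px : X → ℝ) (pyx : X → Y → ℝ) (pzx : X → Z → ℝ) (phz : Z → Zh → ℝ)
    (q : Zh → Y → ℝ)
    (hpx : ∀ x, 0 < px x) (hpyx : ∀ x y, 0 < pyx x y)
    (hpzx : ∀ x z, 0 < pzx x z) (hphz : ∀ z zh, 0 < phz z zh)
    (hpx1 : ∑ x, px x = 1)
    (hpyx1 : ∀ x, ∑ y, pyx x y = 1)
    (hpzx1 : ∀ x, ∑ z, pzx x z = 1)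
    (hphz1 : ∀ z, ∑ zh, phz z zh = 1)
    (hq1 : ∀ zh, ∑ y, q zh y = 1)
    -- absolute continuity: `q(y|zh) > 0` whenever `p(y|zh) > 0`
    (hq0 : ∀ zh y, 0 < pYgivenZhat px pyx pzx phz y zh → 0 < q zh y) :
    -- E_{X,Z}[E_{Zh|Z}[D_KL(P_{Y|X} ‖ P_{Y|Zh})]]
    (∑ x, ∑ z, (px x * pzx x z) * ∑ zh, phz z zh *
        (∑ y, pyx x y * Real.log (pyx x y / pYgivenZhat px pyx pzx phz y zh)))
      ≤
    -- E_{Zh}[H(P_{Y|Zh}, Q_{Y|Zh})]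
    (∑ zh, (∑ x, ∑ z, px x * pzx x z * phz z zh) *
        (-∑ y, pYgivenZhat px pyx pzx phz y zh * Real.log (q zh y))) :=
  stmt1_general px pyx pzx phz q hpx hpyx hpzx hphz hpx1 hpyx1 hpzx1 hq1 hq0
end

section
/- For finite random variables forming the chain Y ↔ X ↔ Z ↔ Ẑ, the nonnegative constant gap identity holds: E_{X,Z,Ẑ}[D_KL(P_{Y|X}‖P_{Y|Ẑ})] = I(X;Y) − I(Ẑ;Y), and this quantity is nonnegative (data processing inequality). -/
open Real Finset

/-!
With the composed channel `W(x, ẑ) = ∑_z p(z|x) p(ẑ|z)`, `Y ↔ X ↔ Ẑ` is a Markov chain and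
`P_{Y|Ẑ}(y|ẑ) = ∑_x p(x) p(y|x) W(x, ẑ) / P_Ẑ(ẑ)`. Splitting `log (p(y|x) / P_{Y|Ẑ}(y|ẑ))` into
`log p(y|x) - log P_{Y|Ẑ}(y|ẑ)` and averaging over the joint law, both sides of the identity become
`H(Y|Ẑ) - H(Y|X)`. Each averaged divergence is nonnegative by Gibbs' inequality, which holds
termwise in the form `a - b ≤ a log (a / b)`, i.e. `klFun ≥ 0`.
-/

namespace MarkovChain

variable {ι X Y Z V : Type*}

lemma sub_le_mul_log_div {a b : ℝ} (ha : 0 ≤ a) (hb : 0 < b) : a - b ≤ a * log (a / b) := by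
  have h := mul_nonneg hb.le (InformationTheory.klFun_nonneg (div_nonneg ha hb.le))
  rw [InformationTheory.klFun_apply, mul_sub, mul_add, ← mul_assoc,
    mul_div_cancel₀ a hb.ne'] at h
  linarith

noncomputable def relEntropy [Fintype ι] (P Q : ι → ℝ) : ℝ := ∑ i, P i * log (P i / Q i)

theorem relEntropy_nonneg [Fintype ι] {P Q : ι → ℝ} (hP : ∀ i, 0 ≤ P i) (hQ : ∀ i, 0 < Q i)
    (hsum : ∑ i, Q i ≤ ∑ i, P i) : 0 ≤ relEntropy P Q :=
  calc 0 ≤ ∑ i, (P i - Q i) := by rw [sum_sub_distrib]; linarith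
    _ ≤ relEntropy P Q := sum_le_sum fun i _ => sub_le_mul_log_div (hP i) (hQ i)

lemma nonempty_of_sum_eq_one [Fintype ι] {f : ι → ℝ} (h : ∑ i, f i = 1) : Nonempty ι :=
  Finset.univ_nonempty_iff.mp (nonempty_of_sum_ne_zero (h ▸ one_ne_zero))

section channelComp

variable [Fintype Z] {K : X → Z → ℝ} {L : Z → V → ℝ}

variable (K L) in
def channelComp (x : X) (v : V) : ℝ := ∑ z, K x z * L z v

lemma channelComp_pos [Nonempty Z] (hK : ∀ x z, 0 < K x z) (hL : ∀ z v, 0 < L z v) (x : X)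
    (v : V) : 0 < channelComp K L x v :=
  sum_pos (fun z _ => mul_pos (hK x z) (hL z v)) univ_nonempty

lemma sum_channelComp_eq_one [Fintype V] (hK1 : ∀ x, ∑ z, K x z = 1)
    (hL1 : ∀ z, ∑ v, L z v = 1) (x : X) : ∑ v, channelComp K L x v = 1 := by
  simp_rw [channelComp]
  rw [sum_comm, ← hK1 x]
  simp_rw [← mul_sum, hL1, mul_one]

lemma sum_sum_mul_channelComp [Fintype X] (c : X → ℝ) (v : V) :
    ∑ x, ∑ z, c x * K x z * L z v = ∑ x, c x * channelComp K L x v := by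
  simp only [channelComp, mul_sum, mul_assoc]

lemma sum_sum_sum_mul_channelComp [Fintype X] [Fintype V] (c : X → ℝ) (F : X → V → ℝ) :
    ∑ x, ∑ z, ∑ v, c x * K x z * L z v * F x v = ∑ x, ∑ v, c x * channelComp K L x v * F x v := by
  refine sum_congr rfl fun x _ => ?_
  rw [sum_comm]
  simp only [channelComp, mul_sum, sum_mul, mul_assoc]

end channelComp

variable [Fintype X] (p : X → ℝ) (K : X → Y → ℝ) (W : X → V → ℝ)

def marginal (y : Y) : ℝ := ∑ x, p x * K x y

def joint (y : Y) (v : V) : ℝ := ∑ x, p x * K x y * W x v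

variable {p K W}

lemma marginal_pos [Nonempty X] (hp : ∀ x, 0 < p x) (hK : ∀ x y, 0 < K x y) (y : Y) :
    0 < marginal p K y :=
  sum_pos (fun x _ => mul_pos (hp x) (hK x y)) univ_nonempty

lemma joint_pos [Nonempty X] (hp : ∀ x, 0 < p x) (hK : ∀ x y, 0 < K x y)
    (hW : ∀ x v, 0 < W x v) (y : Y) (v : V) : 0 < joint p K W y v :=
  sum_pos (fun x _ => mul_pos (mul_pos (hp x) (hK x y)) (hW x v)) univ_nonempty

lemma sum_joint_left [Fintype Y] (hK1 : ∀ x, ∑ y, K x y = 1) (v : V) :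
    ∑ y, joint p K W y v = marginal p W v := by
  simp only [joint, marginal]
  rw [sum_comm]
  refine sum_congr rfl fun x _ => ?_
  rw [← sum_mul, ← mul_sum, hK1, mul_one]

theorem sum_relEntropy_eq_sub [Fintype Y] [Fintype V] [Nonempty X] (hp : ∀ x, 0 < p x)
    (hK : ∀ x y, 0 < K x y) (hW : ∀ x v, 0 < W x v) (hW1 : ∀ x, ∑ v, W x v = 1) :
    ∑ x, ∑ v, p x * W x v * relEntropy (K x) (fun y => joint p K W y v / marginal p W v) =
      ∑ x, ∑ y, p x * K x y * log (K x y / marginal p K y) -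
      ∑ v, ∑ y, joint p K W y v *
        log (joint p K W y v / (marginal p W v * marginal p K y)) := by
  have hJ := joint_pos hp hK hW
  have hPW := marginal_pos hp hW
  have hPK := marginal_pos hp hK
  have hXY : ∑ x, ∑ y, p x * K x y * log (K x y / marginal p K y) =
      ∑ x, ∑ v, ∑ y, p x * K x y * W x v * (log (K x y) - log (marginal p K y)) := by
    refine sum_congr rfl fun x _ => ?_
    rw [sum_comm]
    refine sum_congr rfl fun y _ => ?_
    rw [log_div (hK x y).ne' (hPK y).ne', ← sum_mul, ← mul_sum, hW1, mul_one]
  have hVY : ∑ v, ∑ y, joint p K W y v *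
        log (joint p K W y v / (marginal p W v * marginal p K y)) =
      ∑ x, ∑ v, ∑ y, p x * K x y * W x v *
        (log (joint p K W y v) - log (marginal p W v) - log (marginal p K y)) := by
    have hlog (y : Y) (v : V) : log (joint p K W y v / (marginal p W v * marginal p K y)) =
        log (joint p K W y v) - log (marginal p W v) - log (marginal p K y) := by
      rw [log_div (hJ y v).ne' (mul_pos (hPW v) (hPK y)).ne', log_mul (hPW v).ne' (hPK y).ne',
        sub_add_eq_sub_sub]
    have hexpand (y : Y) (v : V) (c : ℝ) :
        joint p K W y v * c = ∑ x, p x * K x y * W x v * c := sum_mul _ _ _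
    simp_rw [hlog, hexpand]
    exact (sum_congr rfl fun v _ => sum_comm).trans sum_comm
  rw [hXY, hVY, ← sum_sub_distrib]
  refine sum_congr rfl fun x _ => ?_
  rw [← sum_sub_distrib]
  refine sum_congr rfl fun v _ => ?_
  rw [relEntropy, mul_sum, ← sum_sub_distrib]
  refine sum_congr rfl fun y _ => ?_
  rw [log_div (hK x y).ne' (div_pos (hJ y v) (hPW v)).ne', log_div (hJ y v).ne' (hPW v).ne']
  ring

theorem sum_relEntropy_nonneg [Fintype Y] [Fintype V] [Nonempty X] (hp : ∀ x, 0 < p x)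
    (hK : ∀ x y, 0 < K x y) (hW : ∀ x v, 0 < W x v) (hK1 : ∀ x, ∑ y, K x y = 1) :
    0 ≤ ∑ x, ∑ v, p x * W x v * relEntropy (K x) (fun y => joint p K W y v / marginal p W v) := by
  refine sum_nonneg fun x _ => sum_nonneg fun v _ => mul_nonneg (mul_pos (hp x) (hW x v)).le ?_
  have hPW := marginal_pos hp hW v
  refine relEntropy_nonneg (fun y => (hK x y).le)
    (fun y => div_pos (joint_pos hp hK hW y v) hPW) ?_
  rw [← sum_div, sum_joint_left hK1, div_self hPW.ne', hK1]

end MarkovChain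

open MarkovChain in
/-- For finite random variables forming the chain `Y ↔ X ↔ Z ↔ Zh`
(joint pmf `p(x,y,z,zh) = p(x) p(y|x) p(z|x) p(zh|z)`), the constant gap identity
`E_{X,Z,Zh}[D_KL(P_{Y|X} ‖ P_{Y|Zh})] = I(X;Y) − I(Zh;Y)` holds, and this quantity
is nonnegative (data processing inequality). -/
theorem stmt5 {X Y Z Zh : Type*} [Fintype X] [Fintype Y] [Fintype Z] [Fintype Zh]
    (px : X → ℝ) (pyx : X → Y → ℝ) (pzx : X → Z → ℝ) (phz : Z → Zh → ℝ)
    (hpx : ∀ x, 0 < px x) (hpyx : ∀ x y, 0 < pyx x y)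
    (hpzx : ∀ x z, 0 < pzx x z) (hphz : ∀ z zh, 0 < phz z zh)
    (hpx1 : ∑ x, px x = 1)
    (hpyx1 : ∀ x, ∑ y, pyx x y = 1)
    (hpzx1 : ∀ x, ∑ z, pzx x z = 1)
    (hphz1 : ∀ z, ∑ zh, phz z zh = 1) :
    -- E_{X,Z,Zh}[D_KL(P_{Y|X} ‖ P_{Y|Zh})] = I(X;Y) − I(Zh;Y)
    ((∑ x, ∑ z, ∑ zh, (px x * pzx x z * phz z zh) *
        (∑ y, pyx x y * Real.log (pyx x y /
          ((∑ x', ∑ z', px x' * pyx x' y * pzx x' z' * phz z' zh) /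
            (∑ x', ∑ z', px x' * pzx x' z' * phz z' zh)))))
      =
    (∑ x, ∑ y, px x * pyx x y * Real.log (pyx x y / (∑ x', px x' * pyx x' y)))
      -
    (∑ zh, ∑ y, (∑ x', ∑ z', px x' * pyx x' y * pzx x' z' * phz z' zh) *
        Real.log ((∑ x', ∑ z', px x' * pyx x' y * pzx x' z' * phz z' zh) /
          ((∑ x', ∑ z', px x' * pzx x' z' * phz z' zh) * (∑ x', px x' * pyx x' y)))))
    ∧
    -- nonnegativity
    (0 ≤ ∑ x, ∑ z, ∑ zh, (px x * pzx x z * phz z zh) *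
        (∑ y, pyx x y * Real.log (pyx x y /
          ((∑ x', ∑ z', px x' * pyx x' y * pzx x' z' * phz z' zh) /
            (∑ x', ∑ z', px x' * pzx x' z' * phz z' zh))))) := by
  have := nonempty_of_sum_eq_one hpx1
  have := nonempty_of_sum_eq_one (hpzx1 (Classical.arbitrary X))
  have hW := channelComp_pos hpzx hphz
  simp only [sum_sum_mul_channelComp, sum_sum_sum_mul_channelComp]
  exact ⟨sum_relEntropy_eq_sub hpx hpyx hW (sum_channelComp_eq_one hpzx1 hphz1),
    sum_relEntropy_nonneg hpx hpyx hW hpyx1⟩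
end
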